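/- arXiv:2505.05339 — 6 statements merged into one kernel-verified Lean document; each statement's English description precedes it below -/
import Mathlib

section
/- There exists a 3-partite 3-uniform hypergraph H with at least one edge such that for every pair of vertices u, v of H, the matching number of H with u and v deleted equals the matching number of H. -/
/-! Label the vertices of part `i` by `Fin 5`, so that a vertex is a pair `(i, a) : Fin 3 × Fin 5`
and an edge of a 3-partite hypergraph is the graph of a map `Fin 3 → Fin 5`; two edges are disjoint
iff their maps differ in every coordinate. Among the 13 maps of the counterexample no four are
pairwise apart, so `ν(H) = 3`, while any two vertices are avoided by three pairwise apart maps,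
i.e. by a matching of size 3. Both facts are finite checks. -/

open Finset Function

/-- The matching number of a hypergraph given by its finite set of edges:
the largest size of a set of pairwise disjoint edges. -/
noncomputable def matchNum {V : Type*} [DecidableEq V] (E : Finset (Finset V)) : ℕ :=
  sSup {n | ∃ M : Finset (Finset V), M ⊆ E ∧
    (∀ e ∈ M, ∀ f ∈ M, e ≠ f → Disjoint e f) ∧ M.card = n}

section Matching

variable {V : Type*} {E E' M N : Finset (Finset V)} {n : ℕ}

def IsMatching (E M : Finset (Finset V)) : Prop :=
  M ⊆ E ∧ (M : Set (Finset V)).Pairwise Disjoint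

lemma IsMatching.mono (hM : IsMatching E' M) (h : E' ⊆ E) : IsMatching E M :=
  ⟨hM.1.trans h, hM.2⟩

lemma IsMatching.subset (hM : IsMatching E M) (h : N ⊆ M) : IsMatching E N :=
  ⟨h.trans hM.1, hM.2.mono h⟩

variable [DecidableEq V]

lemma IsMatching.card_le_matchNum (hM : IsMatching E M) : #M ≤ matchNum E :=
  le_csSup ⟨#E, fun _ ⟨_, hME, _, hc⟩ => hc ▸ card_le_card hME⟩ ⟨M, hM.1, hM.2, rfl⟩

lemma matchNum_le (h : ∀ M, IsMatching E M → #M ≤ n) : matchNum E ≤ n :=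
  csSup_le ⟨0, ∅, empty_subset _, by simp, card_empty⟩ fun _ ⟨M, hME, hd, hc⟩ =>
    hc ▸ h M ⟨hME, hd⟩

lemma matchNum_mono (h : E' ⊆ E) : matchNum E' ≤ matchNum E :=
  matchNum_le fun _ hM => (hM.mono h).card_le_matchNum

lemma matchNum_le_of_forall_card_ne (h : ∀ M, IsMatching E M → #M ≠ n + 1) :
    matchNum E ≤ n :=
  matchNum_le fun M hM => by
    by_contra! hlt
    obtain ⟨N, hNM, hN⟩ := exists_subset_card_eq (Nat.succ_le_of_lt hlt)
    exact h N (hM.subset hNM) hN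

end Matching

def Apart {ι α : Type*} (f g : ι → α) : Prop := ∀ i, f i ≠ g i

instance {ι α : Type*} [Fintype ι] [DecidableEq α] : DecidableRel (Apart (ι := ι) (α := α)) :=
  fun _ _ => Fintype.decidableForallFintype

lemma Apart.symm {ι α : Type*} {f g : ι → α} (h : Apart f g) : Apart g f :=
  fun i => (h i).symm

instance {ι α : Type*} : Std.Symm (Apart (ι := ι) (α := α)) :=
  ⟨fun _ _ => Apart.symm⟩

lemma Apart.ne {ι α : Type*} [Nonempty ι] {f g : ι → α} (h : Apart f g) : f ≠ g :=
  fun hfg => h (Classical.arbitrary ι) (congrFun hfg _)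

section GraphEdge

variable {ι α : Type*} [Fintype ι] [DecidableEq ι] [DecidableEq α]

def graphEdge (f : ι → α) : Finset (ι × α) :=
  univ.image fun i => (i, f i)

@[simp]
lemma mem_graphEdge {f : ι → α} {x : ι × α} : x ∈ graphEdge f ↔ f x.1 = x.2 := by
  obtain ⟨i, a⟩ := x
  simp [graphEdge, eq_comm]

lemma existsUnique_mem_graphEdge (f : ι → α) (i : ι) :
    ∃! x, x ∈ graphEdge f ∧ x.1 = i :=
  ⟨(i, f i), by simp, fun ⟨j, a⟩ ⟨hx, hj⟩ => by simp_all⟩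

lemma disjoint_graphEdge_iff {f g : ι → α} :
    Disjoint (graphEdge f) (graphEdge g) ↔ Apart f g := by
  simp [disjoint_left, Apart, eq_comm]

lemma graphEdge_injective : Injective (graphEdge : (ι → α) → Finset (ι × α)) :=
  fun f g h => funext fun i => by
    have : (i, f i) ∈ graphEdge g := h ▸ mem_graphEdge.2 rfl
    exact (mem_graphEdge.1 this).symm

variable {S N : Finset (ι → α)}

lemma isMatching_image_graphEdge (hNS : N ⊆ S) (hN : (N : Set (ι → α)).Pairwise Apart) :
    IsMatching (S.image graphEdge) (N.image graphEdge) := by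
  refine ⟨image_subset_image hNS, ?_⟩
  rw [coe_image]
  exact (hN.mono' fun _ _ h => disjoint_graphEdge_iff.2 h).image

lemma IsMatching.exists_eq_image_graphEdge {M : Finset (Finset (ι × α))}
    (hM : IsMatching (S.image graphEdge) M) :
    ∃ N ⊆ S, (N : Set (ι → α)).Pairwise Apart ∧ N.image graphEdge = M := by
  refine ⟨S.filter (graphEdge · ∈ M), filter_subset _ _, ?_, ?_⟩
  · intro f hf g hg hfg
    exact disjoint_graphEdge_iff.1
      (hM.2 (mem_filter.1 hf).2 (mem_filter.1 hg).2 (graphEdge_injective.ne hfg))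
  · rw [← filter_image (p := (· ∈ M)), filter_mem_eq_inter, inter_eq_right.2 hM.1]

lemma card_le_matchNum_image_graphEdge (hNS : N ⊆ S) (hN : (N : Set (ι → α)).Pairwise Apart) :
    #N ≤ matchNum (S.image graphEdge) := by
  simpa [card_image_of_injective _ graphEdge_injective] using
    (isMatching_image_graphEdge hNS hN).card_le_matchNum

lemma matchNum_image_graphEdge_le {n : ℕ}
    (h : ∀ N ⊆ S, (N : Set (ι → α)).Pairwise Apart → #N ≠ n + 1) :
    matchNum (S.image graphEdge) ≤ n :=
  matchNum_le_of_forall_card_ne fun M hM => by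
    obtain ⟨N, hNS, hN, rfl⟩ := hM.exists_eq_image_graphEdge
    rw [card_image_of_injective _ graphEdge_injective]
    exact h N hNS hN

lemma filter_image_graphEdge_avoiding (u v : ι × α) :
    (S.image graphEdge).filter (fun e => u ∉ e ∧ v ∉ e) =
      (S.filter fun f => f u.1 ≠ u.2 ∧ f v.1 ≠ v.2).image graphEdge := by
  rw [filter_image]
  simp

end GraphEdge

def counterexampleMaps : Finset (Fin 3 → Fin 5) :=
  {![0, 0, 4], ![0, 1, 2], ![0, 4, 0], ![1, 3, 3], ![1, 4, 2], ![2, 2, 3], ![2, 3, 2],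
    ![3, 0, 3], ![3, 1, 4], ![3, 2, 1], ![4, 2, 0], ![4, 3, 4], ![4, 4, 1]}

-- Each `Apart` test comes right after its maps are chosen, so the kernel search is pruned early.
theorem counterexampleMaps_no_four_apart :
    ∀ f₁ ∈ counterexampleMaps, ∀ f₂ ∈ counterexampleMaps, ∀ f₃ ∈ counterexampleMaps,
      Apart f₁ f₂ → Apart f₁ f₃ → Apart f₂ f₃ →
      ∀ f₄ ∈ counterexampleMaps, Apart f₁ f₄ → Apart f₂ f₄ → ¬ Apart f₃ f₄ := by
  decide +kernel

theorem counterexampleMaps_three_apart_avoiding (u v : Fin 3 × Fin 5) :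
    ∃ f₁ ∈ counterexampleMaps, ∃ f₂ ∈ counterexampleMaps, ∃ f₃ ∈ counterexampleMaps,
      Apart f₁ f₂ ∧ Apart f₁ f₃ ∧ Apart f₂ f₃ ∧
      (f₁ u.1 ≠ u.2 ∧ f₁ v.1 ≠ v.2) ∧ (f₂ u.1 ≠ u.2 ∧ f₂ v.1 ≠ v.2) ∧
      (f₃ u.1 ≠ u.2 ∧ f₃ v.1 ≠ v.2) := by
  revert u v
  decide +kernel

lemma matchNum_counterexample_le : matchNum (counterexampleMaps.image graphEdge) ≤ 3 := by
  refine matchNum_image_graphEdge_le fun N hNS hN h4 => ?_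
  obtain ⟨a, t, hat, rfl, ht⟩ := card_eq_succ.1 h4
  obtain ⟨b, c, d, hbc, hbd, hcd, rfl⟩ := card_eq_three.1 ht
  simp only [mem_insert, mem_singleton, not_or] at hat
  simp only [insert_subset_iff, singleton_subset_iff] at hNS
  simp only [coe_insert, coe_singleton, Set.pairwise_insert_of_symm, Set.pairwise_singleton,
    Set.mem_singleton_iff, ne_eq, forall_eq, hcd, not_false_eq_true, forall_const, true_and,
    Set.mem_insert_iff, forall_eq_or_imp, hbc, hbd, hat] at hN
  obtain ⟨ha, hb, hc, hd⟩ := hNS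
  obtain ⟨⟨cd, bc, bd⟩, ab, ac, ad⟩ := hN
  exact counterexampleMaps_no_four_apart a ha b hb c hc ab ac bc d hd ad bd cd

lemma three_le_matchNum_counterexample_avoiding (u v : Fin 3 × Fin 5) :
    3 ≤ matchNum ((counterexampleMaps.image graphEdge).filter fun e => u ∉ e ∧ v ∉ e) := by
  obtain ⟨f₁, h₁, f₂, h₂, f₃, h₃, h₁₂, h₁₃, h₂₃, a₁, a₂, a₃⟩ :=
    counterexampleMaps_three_apart_avoiding u v
  rw [filter_image_graphEdge_avoiding]
  have hcard : #({f₁, f₂, f₃} : Finset (Fin 3 → Fin 5)) = 3 :=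
    card_eq_three.2 ⟨f₁, f₂, f₃, h₁₂.ne, h₁₃.ne, h₂₃.ne, rfl⟩
  refine hcard.ge.trans (card_le_matchNum_image_graphEdge ?_ ?_)
  · simp only [insert_subset_iff, singleton_subset_iff, mem_filter]
    exact ⟨⟨h₁, a₁⟩, ⟨h₂, a₂⟩, ⟨h₃, a₃⟩⟩
  · simp [Set.pairwise_insert_of_symm, h₁₂, h₁₃, h₂₃]

/-- There exists a 3-partite 3-uniform hypergraph `H` with at least one edge such that
deleting any pair of vertices does not decrease the matching number. -/
theorem lovasz_conjecture_false :
    ∃ (V : Type) (_ : Fintype V) (_ : DecidableEq V)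
      (part : V → Fin 3) (E : Finset (Finset V)),
      E.Nonempty ∧
      (∀ e ∈ E, ∀ k : Fin 3, ∃! v, v ∈ e ∧ part v = k) ∧
      ∀ u v : V,
        matchNum (E.filter fun e => u ∉ e ∧ v ∉ e) = matchNum E := by
  refine ⟨Fin 3 × Fin 5, inferInstance, inferInstance, Prod.fst,
    counterexampleMaps.image graphEdge, by simp [counterexampleMaps], ?_, fun u v => ?_⟩
  · intro e he k
    obtain ⟨f, -, rfl⟩ := mem_image.1 he
    exact existsUnique_mem_graphEdge f k
  · exact le_antisymm (matchNum_mono (filter_subset _ _))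
      (matchNum_counterexample_le.trans (three_le_matchNum_counterexample_avoiding u v))
end

section
/- In the Biggs-Smith graph, every path along the a-cycle of length at most 7 is a shortest path between its endpoints. -/
/-!
Walking along the `a`-cycle gives `dist ≤ k`. Conversely, a vertex labeling that changes by at
most one along every edge bounds distances from below by label differences. Taking the distances
from `(0, a)`, translated by `i` (the rotation `j ↦ j + 1` is an automorphism), the labels of
`(i, a)` and `(i + k, a)` differ by `k` as long as `k ≤ 7`.
-/

/-- Vertex set of the Biggs-Smith graph: `(i, x)` with `i ∈ ℤ/17` and
`x ∈ {a,b,c,d,e,f}` encoded as `Fin 6` (`0=a, 1=b, 2=c, 3=d, 4=e, 5=f`). -/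
abbrev BSV : Type := ZMod 17 × Fin 6

/-- Base (one-directional) edge relation of the Biggs-Smith graph. -/
def bsRel (p q : BSV) : Prop :=
  (p.1 = q.1 ∧ ((p.2 = 4 ∧ q.2 = 0) ∨ (p.2 = 4 ∧ q.2 = 1) ∨ (p.2 = 5 ∧ q.2 = 2) ∨
    (p.2 = 5 ∧ q.2 = 3) ∨ (p.2 = 4 ∧ q.2 = 5))) ∨
  (p.2 = 0 ∧ q.2 = 0 ∧ q.1 = p.1 + 1) ∨
  (p.2 = 1 ∧ q.2 = 1 ∧ q.1 = p.1 + 4) ∨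
  (p.2 = 2 ∧ q.2 = 2 ∧ q.1 = p.1 + 2) ∨
  (p.2 = 3 ∧ q.2 = 3 ∧ q.1 = p.1 + 8)

/-- The Biggs-Smith graph. -/
def biggsSmith : SimpleGraph BSV := SimpleGraph.fromRel bsRel

instance : DecidableRel bsRel := fun p q => by unfold bsRel; infer_instance

instance : DecidableRel biggsSmith.Adj := fun v w =>
  decidable_of_iff (v ≠ w ∧ (bsRel v w ∨ bsRel w v)) (by
    rw [biggsSmith, SimpleGraph.fromRel_adj])

namespace SimpleGraph

variable {V : Type*} {G : SimpleGraph V} {f : V → ℕ}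

theorem Walk.le_add_length_of_adj_le (hf : ∀ u v, G.Adj u v → f v ≤ f u + 1) {u v : V}
    (w : G.Walk u v) : f v ≤ f u + w.length := by
  induction w with
  | nil => simp
  | cons h _ ih =>
    rw [Walk.length_cons]
    have := hf _ _ h
    omega

theorem Reachable.le_add_dist_of_adj_le (hf : ∀ u v, G.Adj u v → f v ≤ f u + 1) {u v : V}
    (h : G.Reachable u v) : f v ≤ f u + G.dist u v := by
  obtain ⟨w, hw⟩ := h.exists_walk_length_eq_dist
  exact hw ▸ w.le_add_length_of_adj_le hf

end SimpleGraph

theorem bsRel_translate_iff (c : ZMod 17) (p q : BSV) :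
    bsRel (p.1 + c, p.2) (q.1 + c, q.2) ↔ bsRel p q := by
  simp only [bsRel, add_left_inj, add_right_comm _ c]

theorem biggsSmith_adj_translate (c : ZMod 17) {p q : BSV} (h : biggsSmith.Adj p q) :
    biggsSmith.Adj (p.1 + c, p.2) (q.1 + c, q.2) := by
  simp only [biggsSmith, SimpleGraph.fromRel_adj, bsRel_translate_iff, ne_eq, Prod.mk.injEq,
    add_left_inj] at h ⊢
  exact ⟨fun hpq => h.1 (Prod.ext hpq.1 hpq.2), h.2⟩

theorem biggsSmith_adj_succ_a : ∀ j : ZMod 17, biggsSmith.Adj (j, 0) (j + 1, 0) := by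
  decide

open SimpleGraph in
theorem biggsSmith_exists_walk_along_a_cycle (i : ZMod 17) (k : ℕ) :
    ∃ w : biggsSmith.Walk (i, 0) (i + (k : ZMod 17), 0), w.length = k := by
  induction k with
  | zero => exact ⟨Walk.nil.copy rfl (by simp), by simp⟩
  | succ n ih =>
    obtain ⟨w, hw⟩ := ih
    refine ⟨(w.concat (biggsSmith_adj_succ_a _)).copy rfl (by push_cast; ring_nf), ?_⟩
    simp [hw]

/-- The distances from `(0, a)` in the Biggs-Smith graph, one row per letter; all that is used
is that this labeling changes by at most one along every edge. -/
def bsLabel (v : BSV) : ℕ :=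
  (![[0, 1, 2, 3, 4, 5, 6, 7, 6, 6, 7, 6, 5, 4, 3, 2, 1],
    [2, 3, 4, 4, 3, 4, 5, 5, 4, 4, 5, 5, 4, 3, 4, 4, 3],
    [3, 4, 4, 5, 5, 6, 6, 7, 6, 6, 7, 6, 6, 5, 5, 4, 4],
    [3, 4, 5, 6, 6, 7, 6, 5, 4, 4, 5, 6, 7, 6, 6, 5, 4],
    [1, 2, 3, 4, 4, 5, 6, 6, 5, 5, 6, 6, 5, 4, 4, 3, 2],
    [2, 3, 4, 5, 5, 6, 7, 6, 5, 5, 6, 7, 6, 5, 5, 4, 3]] v.2).getD v.1.val 0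

set_option maxRecDepth 10000 in
theorem bsLabel_adj_le : ∀ u v : BSV, biggsSmith.Adj u v → bsLabel v ≤ bsLabel u + 1 := by
  decide

theorem bsLabel_translate_adj_le (i : ZMod 17) {u v : BSV} (h : biggsSmith.Adj u v) :
    bsLabel (v.1 - i, v.2) ≤ bsLabel (u.1 - i, u.2) + 1 := by
  simp only [sub_eq_add_neg]
  exact bsLabel_adj_le _ _ (biggsSmith_adj_translate (-i) h)

theorem bsLabel_a_of_le {k : ℕ} (hk : k ≤ 7) : bsLabel ((k : ZMod 17), 0) = k := by
  interval_cases k <;> rfl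

/-- Every path along the `a`-cycle of the Biggs-Smith graph of length at most 7 is a
shortest path between its endpoints: the distance from `(i,a)` to `(i+k,a)` is `k`
whenever `k ≤ 7`. -/
theorem a_cycle_geodesic :
    ∀ (i : ZMod 17) (k : ℕ), k ≤ 7 →
      biggsSmith.dist (i, 0) (i + (k : ZMod 17), 0) = k := by
  intro i k hk
  obtain ⟨w, hw⟩ := biggsSmith_exists_walk_along_a_cycle i k
  refine le_antisymm ((SimpleGraph.dist_le w).trans_eq hw) ?_
  have h := SimpleGraph.Reachable.le_add_dist_of_adj_le
    (f := fun v => bsLabel (v.1 - i, v.2)) (fun _ _ => bsLabel_translate_adj_le i) ⟨w⟩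
  have h₀ : bsLabel (0, 0) = 0 := rfl
  simpa [h₀, bsLabel_a_of_le hk] using h
end

section
/- For every dihedral permutation α of Z/17 (i.e., i ↦ ±i + t), the map (i,x) ↦ (α(i), x) is an automorphism of the Biggs-Smith graph. -/
/-!
Adjacency of `(i, x)` and `(j, y)` in the Biggs-Smith graph depends only on `x`, `y` and the
difference `j - i`, so every translation of `ℤ/17` is an automorphism. For each pair `(x, y)`
the set of differences that give an edge is closed under negation (it is `{0}` for the spokes
and `{±1}`, `{±4}`, `{±2}`, `{±8}` on the four cycles), so the reflection `i ↦ -i` is one too.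
-/

namespace SimpleGraph

variable {G X : Type*} [AddCommGroup G] (Γ : SimpleGraph (G × X))

lemma adj_iff_adj_zero_sub (hΓ : ∀ s p q, Γ.Adj (p.1 + s, p.2) (q.1 + s, q.2) ↔ Γ.Adj p q)
    (p q : G × X) : Γ.Adj p q ↔ Γ.Adj (0, p.2) (q.1 - p.1, q.2) := by
  simpa [← sub_eq_add_neg] using (hΓ (-p.1) p q).symm

def affineIso (hΓ : ∀ s p q, Γ.Adj (p.1 + s, p.2) (q.1 + s, q.2) ↔ Γ.Adj p q)
    (σ : G ≃+ G) (hσ : ∀ x y d, Γ.Adj (0, x) (σ d, y) ↔ Γ.Adj (0, x) (d, y)) (t : G) :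
    Γ ≃g Γ where
  toEquiv := (σ.toEquiv.trans (Equiv.addRight t)).prodCongr (Equiv.refl X)
  map_rel_iff' {p q} := by
    rw [Γ.adj_iff_adj_zero_sub hΓ, Γ.adj_iff_adj_zero_sub hΓ p q]
    simpa [← map_sub] using hσ p.2 q.2 (q.1 - p.1)

end SimpleGraph

lemma bsRel_add_iff (s : ZMod 17) (p q : BSV) :
    bsRel (p.1 + s, p.2) (q.1 + s, q.2) ↔ bsRel p q := by
  unfold bsRel
  simp only [add_left_inj, add_right_comm _ s]

lemma biggsSmith_adj_add_iff (s : ZMod 17) (p q : BSV) :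
    biggsSmith.Adj (p.1 + s, p.2) (q.1 + s, q.2) ↔ biggsSmith.Adj p q := by
  simp only [biggsSmith, SimpleGraph.fromRel_adj, bsRel_add_iff, ne_eq, Prod.ext_iff,
    add_left_inj]

lemma biggsSmith_adj_zero_neg_iff (x y : Fin 6) (d : ZMod 17) :
    biggsSmith.Adj (0, x) (-d, y) ↔ biggsSmith.Adj (0, x) (d, y) := by
  revert x y d
  decide

/-- For every dihedral permutation `i ↦ ε·i + t` of `ℤ/17` (with `ε = ±1`), the induced
map `(i,x) ↦ (ε·i + t, x)` is an automorphism of the Biggs-Smith graph. -/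
theorem biggsSmith_dihedral_automorphism :
    ∀ ε : ZMod 17, (ε = 1 ∨ ε = -1) → ∀ t : ZMod 17,
      ∃ φ : biggsSmith ≃g biggsSmith,
        ∀ p : BSV, φ p = (ε * p.1 + t, p.2) := by
  rintro ε (rfl | rfl) t
  · exact ⟨biggsSmith.affineIso biggsSmith_adj_add_iff (AddEquiv.refl _)
      (fun _ _ _ => Iff.rfl) t, fun p => by rw [one_mul]; rfl⟩
  · exact ⟨biggsSmith.affineIso biggsSmith_adj_add_iff (AddEquiv.neg _)
      biggsSmith_adj_zero_neg_iff t, fun p => by rw [neg_one_mul]; rfl⟩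
end

section
/- Every independent set in the circulant graph C(17, {1,4}) has at most 6 elements. -/
/-!
The five residues `k, …, k + 4` span a 5-cycle of `C(17, {1,4})` (differences `1` and `4`), so an
independent set meets each such window in at most two elements. Each residue lies in exactly five
of the seventeen windows, so summing over the windows gives `5 * #I ≤ 2 * 17`.
-/

open Finset

section WindowCounting

variable {G : Type*} [AddGroup G] [DecidableEq G]

theorem sum_card_filter_sub_mem [Fintype G] (I W : Finset G) :
    ∑ k, #(I.filter (· - k ∈ W)) = #I * #W := by
  have hfibre (i : G) : ∑ k, (if i - k ∈ W then 1 else 0) = #W := by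
    rw [Fintype.sum_equiv (Equiv.subLeft i) (fun k => if i - k ∈ W then 1 else 0)
      (fun k => if k ∈ W then 1 else 0) fun _ => rfl, sum_boole, filter_mem_eq_inter,
      univ_inter, Nat.cast_id]
  simp_rw [card_filter]
  rw [sum_comm, sum_congr rfl fun i _ => hfibre i, sum_const, smul_eq_mul]

theorem card_filter_sub_mem_le {S W I : Finset G} {m : ℕ}
    (hW : ∀ J ⊆ W, (∀ i ∈ J, ∀ j ∈ J, i - j ∉ S) → #J ≤ m)
    (hI : ∀ i ∈ I, ∀ j ∈ I, i - j ∉ S) (k : G) :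
    #(I.filter (· - k ∈ W)) ≤ m := by
  rw [← card_image_of_injective _ (sub_left_injective (b := k))]
  refine hW _ (fun x hx => ?_) ?_
  · obtain ⟨i, hi, rfl⟩ := mem_image.mp hx
    exact (mem_filter.mp hi).2
  · simp only [mem_image, mem_filter]
    rintro _ ⟨i, ⟨hi, -⟩, rfl⟩ _ ⟨j, ⟨hj, -⟩, rfl⟩
    rw [sub_sub_sub_cancel_right]
    exact hI i hi j hj

theorem card_mul_card_le_of_forall_subset_card_le [Fintype G] {S W I : Finset G} {m : ℕ}
    (hW : ∀ J ⊆ W, (∀ i ∈ J, ∀ j ∈ J, i - j ∉ S) → #J ≤ m)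
    (hI : ∀ i ∈ I, ∀ j ∈ I, i - j ∉ S) :
    #I * #W ≤ m * Fintype.card G :=
  calc #I * #W = ∑ k, #(I.filter (· - k ∈ W)) := (sum_card_filter_sub_mem I W).symm
    _ ≤ ∑ _k : G, m := sum_le_sum fun k _ => card_filter_sub_mem_le hW hI k
    _ = m * Fintype.card G := by rw [sum_const, card_univ, smul_eq_mul, mul_comm]

end WindowCounting

theorem card_le_two_of_subset_window :
    ∀ J ⊆ ({0, 1, 2, 3, 4} : Finset (ZMod 17)),
      (∀ i ∈ J, ∀ j ∈ J, i - j ∉ ({1, -1, 4, -4} : Finset (ZMod 17))) → #J ≤ 2 := by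
  decide

/-- Every independent set in the circulant graph `C(17, {1,4})` has at most 6 elements. -/
theorem circulant_indep_le_six :
    ∀ I : Finset (ZMod 17),
      (∀ i ∈ I, ∀ j ∈ I, i - j ≠ 1 ∧ i - j ≠ -1 ∧ i - j ≠ 4 ∧ i - j ≠ -4) →
      I.card ≤ 6 := by
  intro I hI
  have hI' : ∀ i ∈ I, ∀ j ∈ I, i - j ∉ ({1, -1, 4, -4} : Finset (ZMod 17)) := by
    intro i hi j hj
    simpa only [mem_insert, mem_singleton, not_or] using hI i hi j hj
  have hcount := card_mul_card_le_of_forall_subset_card_le card_le_two_of_subset_window hI'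
  rw [ZMod.card, show #({0, 1, 2, 3, 4} : Finset (ZMod 17)) = 5 from rfl] at hcount
  omega
end

section
/- For every independent set I in the circulant graph C(17, {1,4}) and every set P of 5 cyclically consecutive residues modulo 17, the intersection I ∩ P has at most 2 elements. -/
/-! The interval is `t + {0, …, 4}`, so the elements of `I` in it are `t + k` for `k` in some
`K ⊆ {0, …, 4}` with no two elements differing by `1` or `4`; such a `K` has at most two
elements, which is checked by enumerating the subsets of `{0, …, 4}`. -/

open Finset

lemma card_le_two_of_subset_range_five {K : Finset ℕ} (hK : K ⊆ range 5)
    (hK_gap : ∀ k ∈ K, ∀ l ∈ K, k ≠ l + 1 ∧ k ≠ l + 4) : #K ≤ 2 := by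
  rw [← mem_powerset] at hK
  revert hK_gap
  revert K
  decide

lemma image_range_five_add_natCast {G : Type*} [AddGroupWithOne G] [DecidableEq G] (t : G) :
    (range 5).image (fun k : ℕ => t + k) = {t, t + 1, t + 2, t + 3, t + 4} := by
  ext x
  simp only [range_add_one, range_zero, image_insert, image_empty, mem_insert, mem_singleton]
  push_cast
  simp only [add_zero]
  tauto

theorem card_inter_interval_five_le_two {G : Type*} [AddCommGroupWithOne G] [DecidableEq G]
    {I : Finset G} (hI : ∀ i ∈ I, ∀ j ∈ I, i - j ≠ 1 ∧ i - j ≠ 4) (t : G) :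
    #(I ∩ {t, t + 1, t + 2, t + 3, t + 4}) ≤ 2 := by
  rw [← image_range_five_add_natCast, inter_comm, ← filter_mem_eq_inter, filter_image]
  refine card_image_le.trans (card_le_two_of_subset_range_five (filter_subset _ _) ?_)
  intro k hk l hl
  simp only [mem_filter] at hk hl
  have hdiff := hI _ hk.2 _ hl.2
  rw [add_sub_add_left_eq_sub] at hdiff
  constructor <;> rintro rfl <;> simp at hdiff

/-- Every independent set in the circulant graph `C(17, {1,4})` meets every interval of
5 cyclically consecutive residues in at most 2 elements. -/
theorem circulant_indep_interval :
    ∀ I : Finset (ZMod 17),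
      (∀ i ∈ I, ∀ j ∈ I, i - j ≠ 1 ∧ i - j ≠ -1 ∧ i - j ≠ 4 ∧ i - j ≠ -4) →
      ∀ t : ZMod 17,
        (I ∩ ({t, t + 1, t + 2, t + 3, t + 4} : Finset (ZMod 17))).card ≤ 2 := by
  intro I hI t
  exact card_inter_interval_five_le_two
    (fun i hi j hj => ⟨(hI i hi j hj).1, (hI i hi j hj).2.2.1⟩) t
end

section
/- In the Biggs-Smith graph, for any two pairs consisting of an oriented edge and a vertex, ((u,v),x) and ((u',v'),x'), satisfying dist(u,x) = dist(u',x') and dist(v,x) = dist(v',x'), there exists a graph automorphism φ with φ(u) = u', φ(v) = v', and φ(x) = x'. -/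
namespace BSAux
open SimpleGraph

def u0 : BSV := ((0 : ZMod 17), (4 : Fin 6))
def v0 : BSV := ((0 : ZMod 17), (5 : Fin 6))

def encV (p : BSV) : ℕ := p.1.val * 6 + p.2.val
def decV (n : ℕ) : BSV := (((n / 6 : ℕ) : ZMod 17), ⟨n % 6, Nat.mod_lt _ (by norm_num)⟩)

def rhoL : List ℕ := [1, 0, 2, 3, 4, 5, 25, 73, 48, 53, 49, 52, 28, 27, 14, 38, 29, 26, 24, 34, 42, 40, 30, 36, 18, 6, 17, 13, 12, 16, 22, 97, 46, 67, 19, 43, 23, 75, 15, 71, 21, 69, 20, 35, 47, 56, 32, 44, 8, 10, 63, 57, 11, 9, 98, 100, 45, 51, 101, 99, 86, 77, 65, 50, 74, 62, 89, 33, 93, 41, 87, 39, 88, 7, 64, 37, 85, 61, 84, 96, 95, 91, 90, 94, 78, 76, 60, 70, 72, 66, 82, 81, 92, 68, 83, 80, 79, 31, 54, 59, 55, 58]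
def rhoIL : List ℕ := [1, 0, 2, 3, 4, 5, 25, 73, 48, 53, 49, 52, 28, 27, 14, 38, 29, 26, 24, 34, 42, 40, 30, 36, 18, 6, 17, 13, 12, 16, 22, 97, 46, 67, 19, 43, 23, 75, 15, 71, 21, 69, 20, 35, 47, 56, 32, 44, 8, 10, 63, 57, 11, 9, 98, 100, 45, 51, 101, 99, 86, 77, 65, 50, 74, 62, 89, 33, 93, 41, 87, 39, 88, 7, 64, 37, 85, 61, 84, 96, 95, 91, 90, 94, 78, 76, 60, 70, 72, 66, 82, 81, 92, 68, 83, 80, 79, 31, 54, 59, 55, 58]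
def d0L : List ℕ := [1, 1, 2, 2, 0, 1, 2, 4, 5, 4, 3, 4, 3, 5, 3, 5, 4, 4, 4, 5, 6, 7, 5, 6, 4, 2, 4, 5, 3, 4, 5, 4, 7, 6, 5, 6, 6, 6, 5, 6, 7, 6, 6, 6, 6, 5, 7, 6, 5, 3, 5, 3, 4, 4, 5, 3, 5, 3, 4, 4, 6, 6, 6, 5, 7, 6, 6, 6, 5, 6, 7, 6, 5, 4, 7, 6, 5, 6, 4, 2, 4, 5, 3, 4, 4, 5, 6, 7, 5, 6, 3, 5, 3, 5, 4, 4, 2, 4, 5, 4, 3, 4]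
def d1L : List ℕ := [2, 2, 1, 1, 1, 0, 3, 5, 5, 3, 4, 4, 4, 5, 2, 4, 4, 3, 5, 6, 6, 6, 6, 7, 5, 3, 3, 5, 4, 4, 6, 5, 6, 6, 6, 7, 7, 6, 4, 5, 6, 5, 6, 7, 5, 4, 6, 5, 5, 4, 4, 2, 4, 3, 5, 4, 4, 2, 4, 3, 6, 7, 5, 4, 6, 5, 7, 6, 4, 5, 6, 5, 6, 5, 6, 6, 6, 7, 5, 3, 3, 5, 4, 4, 5, 6, 6, 6, 6, 7, 4, 5, 2, 4, 4, 3, 3, 5, 5, 3, 4, 4]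
def p0L : List ℕ := [4, 4, 5, 5, 4, 4, 0, 10, 11, 57, 6, 10, 6, 16, 2, 17, 12, 14, 12, 97, 8, 75, 18, 22, 28, 1, 14, 29, 25, 28, 24, 55, 20, 81, 31, 34, 30, 13, 26, 93, 37, 38, 48, 19, 56, 99, 47, 45, 52, 25, 53, 3, 49, 51, 58, 79, 59, 3, 55, 57, 54, 85, 50, 9, 65, 63, 72, 91, 80, 15, 67, 68, 78, 49, 77, 27, 73, 76, 82, 1, 92, 83, 79, 82, 90, 7, 98, 33, 84, 88, 96, 94, 2, 95, 90, 92, 0, 100, 101, 51, 96, 100]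
def p1L : List ℕ := [4, 4, 5, 5, 5, 5, 0, 10, 11, 57, 6, 9, 6, 16, 2, 17, 17, 14, 12, 97, 8, 69, 18, 20, 28, 1, 14, 29, 25, 26, 24, 55, 44, 81, 31, 33, 42, 13, 26, 93, 41, 38, 48, 19, 56, 99, 47, 45, 52, 25, 53, 3, 53, 51, 58, 79, 59, 3, 59, 57, 54, 85, 50, 9, 65, 63, 72, 91, 80, 15, 71, 68, 78, 49, 62, 27, 73, 76, 82, 1, 92, 83, 79, 80, 90, 7, 98, 39, 84, 86, 96, 94, 2, 95, 95, 92, 0, 100, 101, 51, 96, 99]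
def psiIdxL : List ℕ := [0, 1, 1, 2, 1, 1, 0, 0, 0, 0, 0, 0, 3, 3, 1, 0, 3, 3, 3, 0, 0, 0, 7, 0, 6, 1, 6, 6, 6, 6, 2, 5, 2, 2, 1, 2, 1, 3, 1, 0, 1, 5, 1, 7, 6, 7, 7, 3, 1, 1, 6, 6, 1, 1, 5, 5, 2, 2, 5, 5, 5, 3, 2, 3, 3, 7, 5, 7, 5, 4, 5, 1, 6, 1, 6, 6, 5, 6, 2, 5, 2, 2, 2, 2, 7, 4, 4, 4, 3, 4, 7, 7, 5, 4, 7, 7, 4, 4, 4, 4, 4, 4]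
def repL : List ℕ := [0, 0, 2, 2, 4, 5, 6, 7, 8, 9, 10, 11, 10, 8, 14, 15, 11, 9, 7, 19, 20, 21, 19, 23, 7, 6, 9, 8, 10, 11, 19, 7, 21, 20, 19, 23, 23, 20, 15, 39, 21, 39, 20, 23, 39, 15, 21, 39, 8, 10, 15, 14, 11, 9, 8, 10, 15, 14, 11, 9, 20, 23, 39, 15, 21, 39, 23, 20, 15, 39, 21, 39, 19, 7, 21, 20, 19, 23, 7, 6, 9, 8, 10, 11, 7, 19, 20, 21, 19, 23, 10, 8, 14, 15, 11, 9, 6, 7, 8, 9, 10, 11]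

def d0F (p : BSV) : ℕ := d0L.getD (encV p) 0
def d1F (p : BSV) : ℕ := d1L.getD (encV p) 0
def p0F (p : BSV) : BSV := decV (p0L.getD (encV p) 0)
def p1F (p : BSV) : BSV := decV (p1L.getD (encV p) 0)
def psiIdxF (p : BSV) : ℕ := psiIdxL.getD (encV p) 0
def repF (p : BSV) : BSV := decV (repL.getD (encV p) 0)
def rhoF (p : BSV) : BSV := decV (rhoL.getD (encV p) 0)
def rhoInvF (p : BSV) : BSV := decV (rhoIL.getD (encV p) 0)

def sigF (p : BSV) : BSV := (p.1 + 1, p.2)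
def sigInvF (p : BSV) : BSV := (p.1 - 1, p.2)
def piF : Fin 6 → Fin 6 := ![2, 3, 1, 0, 5, 4]
def piInvF : Fin 6 → Fin 6 := ![3, 2, 0, 1, 5, 4]
def muF (p : BSV) : BSV := (2 * p.1, piF p.2)
def muInvF (p : BSV) : BSV := (9 * p.1, piInvF p.2)

set_option maxRecDepth 100000 in
def sigE : Equiv BSV BSV := ⟨sigF, sigInvF, by decide, by decide⟩
set_option maxRecDepth 100000 in
def muE : Equiv BSV BSV := ⟨muF, muInvF, by decide, by decide⟩
set_option maxRecDepth 100000 in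
def rhoE : Equiv BSV BSV := ⟨rhoF, rhoInvF, by decide, by decide⟩

set_option maxRecDepth 100000 in
set_option maxHeartbeats 16000000 in
lemma bigAdj : ∀ a b : BSV, biggsSmith.Adj a b →
    (biggsSmith.Adj (sigF a) (sigF b) ∧ biggsSmith.Adj (sigInvF a) (sigInvF b) ∧
     biggsSmith.Adj (muF a) (muF b) ∧ biggsSmith.Adj (muInvF a) (muInvF b) ∧
     biggsSmith.Adj (rhoF a) (rhoF b) ∧ biggsSmith.Adj (rhoInvF a) (rhoInvF b) ∧
     d0F b ≤ d0F a + 1 ∧ d1F b ≤ d1F a + 1) := by decide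

def mkIso (e : Equiv BSV BSV)
    (h1 : ∀ a b : BSV, biggsSmith.Adj a b → biggsSmith.Adj (e a) (e b))
    (h2 : ∀ a b : BSV, biggsSmith.Adj a b → biggsSmith.Adj (e.symm a) (e.symm b)) :
    biggsSmith ≃g biggsSmith :=
  { toEquiv := e,
     map_rel_iff' := @fun a b => ⟨fun h => by
       have := h2 _ _ h
       simpa using this, h1 a b⟩ }

def sigIso : biggsSmith ≃g biggsSmith :=
  mkIso sigE (fun a b h => (bigAdj a b h).1) (fun a b h => (bigAdj a b h).2.1)
def muIso : biggsSmith ≃g biggsSmith :=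
  mkIso muE (fun a b h => (bigAdj a b h).2.2.1) (fun a b h => (bigAdj a b h).2.2.2.1)
def rhoIso : biggsSmith ≃g biggsSmith :=
  mkIso rhoE (fun a b h => (bigAdj a b h).2.2.2.2.1) (fun a b h => (bigAdj a b h).2.2.2.2.2.1)

lemma hlip0 : ∀ a b : BSV, biggsSmith.Adj a b → d0F b ≤ d0F a + 1 :=
  fun a b h => (bigAdj a b h).2.2.2.2.2.2.1
lemma hlip1 : ∀ a b : BSV, biggsSmith.Adj a b → d1F b ≤ d1F a + 1 :=
  fun a b h => (bigAdj a b h).2.2.2.2.2.2.2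

set_option maxRecDepth 100000 in
set_option maxHeartbeats 4000000 in
lemma hzero0 : ∀ z : BSV, d0F z = 0 → z = u0 := by decide
set_option maxRecDepth 100000 in
set_option maxHeartbeats 4000000 in
lemma hzero1 : ∀ z : BSV, d1F z = 0 → z = v0 := by decide
set_option maxRecDepth 100000 in
set_option maxHeartbeats 4000000 in
lemma hstep0 : ∀ z : BSV, d0F z ≠ 0 →
    biggsSmith.Adj (p0F z) z ∧ d0F (p0F z) + 1 = d0F z := by decide
set_option maxRecDepth 100000 in
set_option maxHeartbeats 4000000 in
lemma hstep1 : ∀ z : BSV, d1F z ≠ 0 →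
    biggsSmith.Adj (p1F z) z ∧ d1F (p1F z) + 1 = d1F z := by decide

lemma walk_of (D : BSV → ℕ) (P : BSV → BSV) (b : BSV)
    (hzero : ∀ z, D z = 0 → z = b)
    (hstep : ∀ z, D z ≠ 0 → biggsSmith.Adj (P z) z ∧ D (P z) + 1 = D z) :
    ∀ (n : ℕ) (z : BSV), D z = n → Nonempty {p : biggsSmith.Walk b z // p.length = n} := by
  intro n
  induction n with
  | zero =>
    intro z hz
    have hzb := hzero z hz
    subst hzb
    exact ⟨⟨Walk.nil, rfl⟩⟩
  | succ n ih =>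
    intro z hz
    obtain ⟨hadj, hPD⟩ := hstep z (by omega)
    obtain ⟨⟨p, hp⟩⟩ := ih (P z) (by omega)
    exact ⟨⟨p.concat hadj, by rw [Walk.length_concat, hp]⟩⟩

lemma D_le_walk (D : BSV → ℕ)
    (hlip : ∀ a c : BSV, biggsSmith.Adj a c → D c ≤ D a + 1) :
    ∀ (w z : BSV) (p : biggsSmith.Walk w z), D z ≤ D w + p.length := by
  intro w z p
  induction p with
  | nil => simp
  | cons h q ih =>
    have := hlip _ _ h
    rw [Walk.length_cons]
    omega

lemma dist_eq_table (D : BSV → ℕ) (P : BSV → BSV) (b : BSV)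
    (hzero : ∀ z, D z = 0 → z = b)
    (hstep : ∀ z, D z ≠ 0 → biggsSmith.Adj (P z) z ∧ D (P z) + 1 = D z)
    (hlip : ∀ a c : BSV, biggsSmith.Adj a c → D c ≤ D a + 1)
    (hb : D b = 0) :
    ∀ z : BSV, biggsSmith.dist b z = D z := by
  intro z
  obtain ⟨⟨p, hp⟩⟩ := walk_of D P b hzero hstep (D z) z rfl
  have h1 : biggsSmith.dist b z ≤ D z := hp ▸ SimpleGraph.dist_le p
  have hr : biggsSmith.Reachable b z := ⟨p⟩
  obtain ⟨q, hq⟩ := hr.exists_walk_length_eq_dist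
  have h2 := D_le_walk D hlip b z q
  omega

lemma distU : ∀ z : BSV, biggsSmith.dist u0 z = d0F z :=
  dist_eq_table d0F p0F u0 hzero0 hstep0 hlip0 (by decide)
lemma distV : ∀ z : BSV, biggsSmith.dist v0 z = d1F z :=
  dist_eq_table d1F p1F v0 hzero1 hstep1 hlip1 (by decide)

lemma reach0 (z : BSV) : biggsSmith.Reachable u0 z := by
  obtain ⟨⟨p, _⟩⟩ := walk_of d0F p0F u0 hzero0 hstep0 (d0F z) z rfl
  exact ⟨p⟩

lemma reachAll (a c : BSV) : biggsSmith.Reachable a c :=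
  (reach0 a).symm.trans (reach0 c)

lemma iso_dist (φ : biggsSmith ≃g biggsSmith) (a c : BSV) :
    biggsSmith.dist (φ a) (φ c) = biggsSmith.dist a c := by
  have key : ∀ (ψ : biggsSmith ≃g biggsSmith) (a c : BSV),
      biggsSmith.dist (ψ a) (ψ c) ≤ biggsSmith.dist a c := by
    intro ψ a c
    obtain ⟨p, hp⟩ := (reachAll a c).exists_walk_length_eq_dist
    calc biggsSmith.dist (ψ a) (ψ c) ≤ (p.map ψ.toHom).length := SimpleGraph.dist_le _
      _ = biggsSmith.dist a c := by rw [Walk.length_map, hp]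
  refine le_antisymm (key φ a c) ?_
  have := key φ.symm (φ a) (φ c)
  simpa using this

def sPow : ℕ → (biggsSmith ≃g biggsSmith)
  | 0 => RelIso.refl _
  | n + 1 => (sPow n).trans sigIso

lemma sPow_apply : ∀ (n : ℕ) (p : BSV), sPow n p = (p.1 + (n : ZMod 17), p.2) := by
  intro n
  induction n with
  | zero => intro p; show p = _; simp
  | succ n ih =>
    intro p
    show sigIso (sPow n p) = _
    rw [ih]
    show ((p.1 + (n : ZMod 17)) + 1, p.2) = _
    have : (p.1 + (n : ZMod 17)) + 1 = p.1 + ((n + 1 : ℕ) : ZMod 17) := by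
      push_cast
      ring
    rw [this]

def baseEdges : List (BSV × BSV) := [(((0 : ZMod 17), (0 : Fin 6)), ((0 : ZMod 17), (4 : Fin 6))), (((0 : ZMod 17), (0 : Fin 6)), ((1 : ZMod 17), (0 : Fin 6))), (((0 : ZMod 17), (0 : Fin 6)), ((16 : ZMod 17), (0 : Fin 6))), (((0 : ZMod 17), (1 : Fin 6)), ((0 : ZMod 17), (4 : Fin 6))), (((0 : ZMod 17), (1 : Fin 6)), ((4 : ZMod 17), (1 : Fin 6))), (((0 : ZMod 17), (1 : Fin 6)), ((13 : ZMod 17), (1 : Fin 6))), (((0 : ZMod 17), (2 : Fin 6)), ((0 : ZMod 17), (5 : Fin 6))), (((0 : ZMod 17), (2 : Fin 6)), ((2 : ZMod 17), (2 : Fin 6))), (((0 : ZMod 17), (2 : Fin 6)), ((15 : ZMod 17), (2 : Fin 6))), (((0 : ZMod 17), (3 : Fin 6)), ((0 : ZMod 17), (5 : Fin 6))), (((0 : ZMod 17), (3 : Fin 6)), ((8 : ZMod 17), (3 : Fin 6))), (((0 : ZMod 17), (3 : Fin 6)), ((9 : ZMod 17), (3 : Fin 6))), (((0 : ZMod 17),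 (4 : Fin 6)), ((0 : ZMod 17), (0 : Fin 6))), (((0 : ZMod 17), (4 : Fin 6)), ((0 : ZMod 17), (1 : Fin 6))), (((0 : ZMod 17), (4 : Fin 6)), ((0 : ZMod 17), (5 : Fin 6))), (((0 : ZMod 17), (5 : Fin 6)), ((0 : ZMod 17), (2 : Fin 6))), (((0 : ZMod 17), (5 : Fin 6)), ((0 : ZMod 17), (3 : Fin 6))), (((0 : ZMod 17), (5 : Fin 6)), ((0 : ZMod 17), (4 : Fin 6)))]

def edgeCanon : ℕ → (biggsSmith ≃g biggsSmith)
  | 0 => muIso.symm.trans (sigIso.trans (muIso.symm.trans (rhoIso.trans sigIso)))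
  | 1 => sigIso.trans (muIso.trans (rhoIso.trans (sigIso.trans (sigIso.trans (muIso.trans (rhoIso.trans (sigIso.symm)))))))
  | 2 => sigIso.symm.trans (muIso.trans (rhoIso.trans (sigIso.symm.trans (sigIso.symm.trans (muIso.trans (rhoIso.trans sigIso))))))
  | 3 => muIso.trans (sigIso.trans (muIso.symm.trans (rhoIso.trans sigIso)))
  | 4 => sigIso.trans (muIso.symm.trans (sigIso.trans (rhoIso.trans (sigIso.symm.trans (muIso.trans (sigIso.symm))))))
  | 5 => sigIso.trans (rhoIso.trans (sigIso.symm.trans (sigIso.symm.trans (sigIso.symm.trans (rhoIso.trans sigIso)))))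
  | 6 => muIso.trans (muIso.trans (sigIso.trans (muIso.symm.trans (rhoIso.trans sigIso))))
  | 7 => sigIso.trans (sigIso.trans (rhoIso.trans (sigIso.trans (sigIso.trans (muIso.trans (rhoIso.trans (sigIso.symm)))))))
  | 8 => sigIso.symm.trans (sigIso.symm.trans (rhoIso.trans (sigIso.symm.trans (sigIso.symm.trans (muIso.trans (rhoIso.trans sigIso))))))
  | 9 => sigIso.trans (muIso.symm.trans (rhoIso.trans sigIso))
  | 10 => sigIso.trans (sigIso.trans (sigIso.trans (muIso.trans (rhoIso.trans (sigIso.symm.trans (muIso.symm.trans (sigIso.symm)))))))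
  | 11 => sigIso.trans (sigIso.trans (muIso.trans (sigIso.trans (rhoIso.trans (sigIso.symm.trans (sigIso.symm.trans (sigIso.symm)))))))
  | 12 => sigIso.trans (sigIso.trans (muIso.trans (rhoIso.trans (sigIso.symm.trans (sigIso.symm)))))
  | 13 => muIso.trans (sigIso.trans (muIso.symm.trans (rhoIso.trans (sigIso.trans muIso))))
  | 14 => RelIso.refl _
  | 15 => sigIso.trans (sigIso.trans (sigIso.trans (sigIso.trans (rhoIso.trans (sigIso.symm.trans (sigIso.symm))))))
  | 16 => sigIso.trans (muIso.symm.trans (rhoIso.trans (sigIso.trans muIso)))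
  | 17 => muIso
  | _ => RelIso.refl _

def eIdxF (c : Fin 6) (q : BSV) : ℕ := List.idxOf (((0 : ZMod 17), c), q) baseEdges

set_option maxRecDepth 100000 in
set_option maxHeartbeats 8000000 in
lemma stage1base : ∀ (c : Fin 6) (q : BSV), biggsSmith.Adj ((0 : ZMod 17), c) q →
    (edgeCanon (eIdxF c q)) ((0 : ZMod 17), c) = u0 ∧ (edgeCanon (eIdxF c q)) q = v0 := by
  decide

lemma stage1 (u v : BSV) (h : biggsSmith.Adj u v) :
    ∃ φ : biggsSmith ≃g biggsSmith, φ u = u0 ∧ φ v = v0 := by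
  obtain ⟨i, c⟩ := u
  have hiv : ((i.val : ℕ) : ZMod 17) = i := ZMod.natCast_rightInverse i
  have hsum : i + ((17 - i.val : ℕ) : ZMod 17) = 0 := by
    have h17 : i.val + (17 - i.val) = 17 := by
      have := ZMod.val_lt i
      omega
    calc i + ((17 - i.val : ℕ) : ZMod 17)
        = ((i.val : ℕ) : ZMod 17) + ((17 - i.val : ℕ) : ZMod 17) := by rw [hiv]
      _ = ((i.val + (17 - i.val) : ℕ) : ZMod 17) := by rw [Nat.cast_add]
      _ = ((17 : ℕ) : ZMod 17) := by rw [h17]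
      _ = 0 := ZMod.natCast_self 17
  have hk : sPow (17 - i.val) (i, c) = ((0 : ZMod 17), c) := by
    rw [sPow_apply]
    show (i + ((17 - i.val : ℕ) : ZMod 17), c) = _
    rw [hsum]
  have h2 : biggsSmith.Adj ((0 : ZMod 17), c) (sPow (17 - i.val) v) := by
    rw [← hk]
    exact (sPow (17 - i.val)).map_adj_iff.mpr h
  obtain ⟨h3, h4⟩ := stage1base c _ h2
  refine ⟨(sPow (17 - i.val)).trans (edgeCanon (eIdxF c (sPow (17 - i.val) v))), ?_, ?_⟩
  · rw [RelIso.trans_apply, hk]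
    exact h3
  · rw [RelIso.trans_apply]
    exact h4

def repsList : List BSV := [((0 : ZMod 17), (0 : Fin 6)), ((0 : ZMod 17), (2 : Fin 6)), ((0 : ZMod 17), (4 : Fin 6)), ((0 : ZMod 17), (5 : Fin 6)), ((1 : ZMod 17), (0 : Fin 6)), ((1 : ZMod 17), (1 : Fin 6)), ((1 : ZMod 17), (2 : Fin 6)), ((1 : ZMod 17), (3 : Fin 6)), ((1 : ZMod 17), (4 : Fin 6)), ((1 : ZMod 17), (5 : Fin 6)), ((2 : ZMod 17), (2 : Fin 6)), ((2 : ZMod 17), (3 : Fin 6)), ((3 : ZMod 17), (1 : Fin 6)), ((3 : ZMod 17), (2 : Fin 6)), ((3 : ZMod 17), (3 : Fin 6)), ((3 : ZMod 17), (5 : Fin 6)), ((6 : ZMod 17), (3 : Fin 6))]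

def stList : ℕ → (biggsSmith ≃g biggsSmith)
  | 0 => RelIso.refl _
  | 1 => rhoIso
  | 2 => muIso.trans muIso
  | 3 => muIso.trans (muIso.trans rhoIso)
  | 4 => muIso.trans (muIso.trans (muIso.trans muIso))
  | 5 => muIso.trans (muIso.trans (muIso.trans (muIso.trans rhoIso)))
  | 6 => muIso.trans (muIso.trans (muIso.trans (muIso.trans (muIso.trans muIso))))
  | 7 => muIso.trans (muIso.trans (muIso.trans (muIso.trans (muIso.trans (muIso.trans rhoIso)))))
  | _ => RelIso.refl _

set_option maxRecDepth 100000 in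
set_option maxHeartbeats 8000000 in
lemma stMap : ∀ x : BSV,
    stList (psiIdxF x) u0 = u0 ∧ stList (psiIdxF x) v0 = v0 ∧
    stList (psiIdxF x) x = repF x ∧ repF x ∈ repsList := by decide

set_option maxRecDepth 100000 in
set_option maxHeartbeats 4000000 in
lemma repsInj : ∀ r ∈ repsList, ∀ r' ∈ repsList,
    d0F r = d0F r' → d1F r = d1F r' → r = r' := by decide

lemma stage2 (x : BSV) :
    ∃ (ψ : biggsSmith ≃g biggsSmith) (r : BSV),
      ψ u0 = u0 ∧ ψ v0 = v0 ∧ ψ x = r ∧ r ∈ repsList :=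
  ⟨stList (psiIdxF x), repF x, (stMap x).1, (stMap x).2.1, (stMap x).2.2.1, (stMap x).2.2.2⟩

end BSAux

open BSAux in
/-- In the Biggs-Smith graph, for any two pairs each consisting of an oriented edge and a
vertex, `((u,v),x)` and `((u',v'),x')`, with `dist(u,x) = dist(u',x')` and
`dist(v,x) = dist(v',x')`, there is an automorphism carrying one to the other. -/
theorem biggsSmith_edge_vertex_transitive :
    ∀ u v x u' v' x' : BSV, biggsSmith.Adj u v → biggsSmith.Adj u' v' →
      biggsSmith.dist u x = biggsSmith.dist u' x' →
      biggsSmith.dist v x = biggsSmith.dist v' x' →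
      ∃ φ : biggsSmith ≃g biggsSmith, φ u = u' ∧ φ v = v' ∧ φ x = x' := by
  intro u v x u' v' x' h h' hd1 hd2
  obtain ⟨φ1, hu1, hv1⟩ := stage1 u v h
  obtain ⟨ψ1, r1, ha1, hb1, hx1, hr1⟩ := stage2 (φ1 x)
  obtain ⟨φ2, hu2, hv2⟩ := stage1 u' v' h'
  obtain ⟨ψ2, r2, ha2, hb2, hx2, hr2⟩ := stage2 (φ2 x')
  set Φ1 := φ1.trans ψ1 with hΦ1
  set Φ2 := φ2.trans ψ2 with hΦ2
  have e1u : Φ1 u = u0 := by rw [hΦ1, RelIso.trans_apply, hu1, ha1]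
  have e1v : Φ1 v = v0 := by rw [hΦ1, RelIso.trans_apply, hv1, hb1]
  have e1x : Φ1 x = r1 := by rw [hΦ1, RelIso.trans_apply, hx1]
  have e2u : Φ2 u' = u0 := by rw [hΦ2, RelIso.trans_apply, hu2, ha2]
  have e2v : Φ2 v' = v0 := by rw [hΦ2, RelIso.trans_apply, hv2, hb2]
  have e2x : Φ2 x' = r2 := by rw [hΦ2, RelIso.trans_apply, hx2]
  have k1 : d0F r1 = biggsSmith.dist u x := by
    rw [← distU r1, ← e1u, ← e1x, iso_dist Φ1]
  have k2 : d1F r1 = biggsSmith.dist v x := by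
    rw [← distV r1, ← e1v, ← e1x, iso_dist Φ1]
  have k3 : d0F r2 = biggsSmith.dist u' x' := by
    rw [← distU r2, ← e2u, ← e2x, iso_dist Φ2]
  have k4 : d1F r2 = biggsSmith.dist v' x' := by
    rw [← distV r2, ← e2v, ← e2x, iso_dist Φ2]
  have hr : r1 = r2 := repsInj r1 hr1 r2 hr2 (by omega) (by omega)
  refine ⟨Φ1.trans Φ2.symm, ?_, ?_, ?_⟩
  · rw [RelIso.trans_apply, e1u, ← e2u, RelIso.symm_apply_apply]
  · rw [RelIso.trans_apply, e1v, ← e2v, RelIso.symm_apply_apply]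
  · rw [RelIso.trans_apply, e1x, hr, ← e2x, RelIso.symm_apply_apply]
end
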